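/- arXiv:2011.00306 — 2 statements merged into one kernel-verified Lean document; each statement's English description precedes it below -/
import Mathlib

section
/- For any almost periodic function a(t,x) (in t, uniformly in x) and any x ∈ D and ε > 0, there exists A ∈ W^{1,∞}(ℝ) such that a(t,x) + A'(t) ≥ â(x) − ε for a.e. t ∈ ℝ, where â(x) = lim_{T→∞}(1/T)∫₀^T a(t,x)dt. -/
open MeasureTheory Filter Real

noncomputable section

abbrev Pt (N : ℕ) := EuclideanSpace ℝ (Fin N)
abbrev XX (N : ℕ) := BoundedContinuousFunction (Pt N) ℝ

def UnifContOn2 {N : ℕ} (D : Set (Pt N)) (a : ℝ → Pt N → ℝ) : Prop :=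
  ∀ ε > 0, ∃ δ > 0, ∀ t t' : ℝ, ∀ x ∈ closure D, ∀ x' ∈ closure D,
    |t - t'| < δ → dist x x' < δ → |a t x - a t' x'| < ε

def BoundedCoef {N : ℕ} (a : ℝ → Pt N → ℝ) : Prop := ∃ C, ∀ t x, |a t x| ≤ C

def AlmostPeriodicUnif {N : ℕ} (D : Set (Pt N)) (a : ℝ → Pt N → ℝ) : Prop :=
  BoundedCoef a ∧ UnifContOn2 D a ∧
  ∀ ε > 0, ∃ L > 0, ∀ r : ℝ, ∃ τ ∈ Set.Icc r (r + L),
    ∀ t : ℝ, ∀ x ∈ closure D, |a (t + τ) x - a t x| ≤ ε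

def KernelH1 {N : ℕ} (κ : Pt N → ℝ) : Prop :=
  ContDiff ℝ 1 κ ∧ (∀ x, 0 ≤ κ x) ∧ 0 < κ 0 ∧ (∫ x, κ x) = 1 ∧
  ∃ μ > 0, ∃ M > 0, ∀ x : Pt N, M ≤ ‖x‖ →
    κ x ≤ Real.exp (-μ * ‖x‖) ∧ ‖fderiv ℝ κ x‖ ≤ Real.exp (-μ * ‖x‖)

structure NonlocalEvol {N : ℕ} (D : Set (Pt N)) (κ : Pt N → ℝ) (a : ℝ → Pt N → ℝ) where
  Φ : ℝ → ℝ → (XX N →L[ℝ] XX N)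
  init : ∀ s u₀, Φ s s u₀ = u₀
  sol : ∀ (s : ℝ) (u₀ : XX N), ∀ x ∈ closure D, ∀ t, s ≤ t →
    HasDerivAt (fun τ => Φ τ s u₀ x)
      ((∫ y in D, κ (y - x) * Φ t s u₀ y) + a t x * Φ t s u₀ x) t

def tsFilter : Filter (ℝ × ℝ) := Filter.comap (fun p : ℝ × ℝ => p.1 - p.2) Filter.atTop

def lamPL {N : ℕ} {D : Set (Pt N)} {κ : Pt N → ℝ} {a : ℝ → Pt N → ℝ}
    (E : NonlocalEvol D κ a) : ℝ :=
  Filter.limsup (fun p : ℝ × ℝ => Real.log ‖E.Φ p.1 p.2‖ / (p.1 - p.2)) tsFilter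

def lamPL' {N : ℕ} {D : Set (Pt N)} {κ : Pt N → ℝ} {a : ℝ → Pt N → ℝ}
    (E : NonlocalEvol D κ a) : ℝ :=
  Filter.liminf (fun p : ℝ × ℝ => Real.log ‖E.Φ p.1 p.2‖ / (p.1 - p.2)) tsFilter

def PESet {N : ℕ} (D : Set (Pt N)) (κ : Pt N → ℝ) (a : ℝ → Pt N → ℝ) : Set ℝ :=
  {lam | ∃ φ φt : ℝ → Pt N → ℝ,
    BoundedCoef φ ∧ UnifContOn2 D φ ∧
    (∀ t : ℝ, ∀ x ∈ closure D, 0 ≤ φ t x) ∧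
    (∃ x ∈ closure D, 0 < ⨅ t : ℝ, φ t x) ∧
    ∀ᵐ t : ℝ, ∀ x ∈ closure D,
      HasDerivAt (fun s => φ s x) (φt t x) t ∧
      lam * φ t x ≤ -φt t x + (∫ y in D, κ (y - x) * φ t y) + a t x * φ t x}

def PESet' {N : ℕ} (D : Set (Pt N)) (κ : Pt N → ℝ) (a : ℝ → Pt N → ℝ) : Set ℝ :=
  {lam | ∃ φ φt : ℝ → Pt N → ℝ,
    BoundedCoef φ ∧ UnifContOn2 D φ ∧
    (∃ c > 0, ∀ t : ℝ, ∀ x ∈ closure D, c ≤ φ t x) ∧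
    ∀ᵐ t : ℝ, ∀ x ∈ closure D,
      HasDerivAt (fun s => φ s x) (φt t x) t ∧
      -φt t x + (∫ y in D, κ (y - x) * φ t y) + a t x * φ t x ≤ lam * φ t x}

def lamPE {N : ℕ} (D : Set (Pt N)) (κ : Pt N → ℝ) (a : ℝ → Pt N → ℝ) : ℝ :=
  sSup (PESet D κ a)

def lamPE' {N : ℕ} (D : Set (Pt N)) (κ : Pt N → ℝ) (a : ℝ → Pt N → ℝ) : ℝ :=
  sInf (PESet' D κ a)

/-! The means of `a(·, x)` over windows `[t, t + T]` converge to `â(x)` as `T → ∞` uniformly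
in `t`: an `ε`-almost period `τ` moves the window `[t, t + T]` to one starting in `[0, L]` at a
cost `εT`, and sliding that window to `[0, T]` costs only `O(L)`.
Fix such a `T`. With `B` a primitive of `a(·, x)`, the corrector `A(t)` is the mean of the
increments `B(s) - B(t)` over `s ∈ [t, t + T]`; it is bounded by `T sup |a|`, and `A'(t)` is the
window mean at `t` minus `a(t, x)`, so `a(t, x) + A'(t)` is that window mean, which is `ε`-close
to `â(x)`. -/

open intervalIntegral

def HasRelDenseAlmostPeriods (f : ℝ → ℝ) : Prop :=
  ∀ ε > 0, ∃ L > 0, ∀ r : ℝ, ∃ τ ∈ Set.Icc r (r + L), ∀ t, |f (t + τ) - f t| ≤ ε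

lemma UnifContOn2.continuous_slice {N : ℕ} {D : Set (Pt N)} {a : ℝ → Pt N → ℝ}
    (ha : UnifContOn2 D a) {x : Pt N} (hx : x ∈ closure D) : Continuous fun t => a t x := by
  refine Metric.continuous_iff.mpr fun t ε hε => ?_
  obtain ⟨δ, hδ, h⟩ := ha ε hε
  exact ⟨δ, hδ, fun s hs => h s t x hx x hx hs (by simpa using hδ)⟩

lemma AlmostPeriodicUnif.hasRelDenseAlmostPeriods_slice {N : ℕ} {D : Set (Pt N)}
    {a : ℝ → Pt N → ℝ} (ha : AlmostPeriodicUnif D a) {x : Pt N} (hx : x ∈ closure D) :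
    HasRelDenseAlmostPeriods fun t => a t x := by
  intro ε hε
  obtain ⟨L, hL, h⟩ := ha.2.2 ε hε
  refine ⟨L, hL, fun r => ?_⟩
  obtain ⟨τ, hτ, hτa⟩ := h r
  exact ⟨τ, hτ, fun t => hτa t x hx⟩

section WindowMean

variable {f : ℝ → ℝ} {C : ℝ}

lemma abs_integral_sub_integral_add_le_of_almostPeriod {δ τ : ℝ} (hf : Continuous f)
    (hτ : ∀ s, |f (s + τ) - f s| ≤ δ) (a b : ℝ) :
    |(∫ s in a..b, f s) - ∫ s in a + τ..b + τ, f s| ≤ δ * |b - a| := by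
  have hfτ : Continuous fun s => f (s + τ) := by fun_prop
  rw [← integral_comp_add_right, ← integral_sub (hf.intervalIntegrable a b)
    (hfτ.intervalIntegrable a b), ← Real.norm_eq_abs]
  refine intervalIntegral.norm_integral_le_of_norm_le_const fun s _ => ?_
  rw [Real.norm_eq_abs, abs_sub_comm]
  exact hτ s

lemma abs_integral_add_sub_integral_le_of_abs_le (hf : Continuous f) (hC : ∀ t, |f t| ≤ C)
    (a b r : ℝ) :
    |(∫ s in a + r..b + r, f s) - ∫ s in a..b, f s| ≤ 2 * C * |r| := by
  have hint : ∀ u v : ℝ, IntervalIntegrable f volume u v := hf.intervalIntegrable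
  have hbound (u v : ℝ) : |∫ s in u..v, f s| ≤ C * |v - u| :=
    intervalIntegral.norm_integral_le_of_norm_le_const fun s _ =>
      (Real.norm_eq_abs _).trans_le (hC s)
  rw [integral_interval_sub_interval_comm (hint _ _) (hint _ _) (hint _ _)]
  calc |(∫ s in a + r..a, f s) - ∫ s in b + r..b, f s|
      ≤ |∫ s in a + r..a, f s| + |∫ s in b + r..b, f s| := abs_sub _ _
    _ ≤ C * |a - (a + r)| + C * |b - (b + r)| := add_le_add (hbound _ _) (hbound _ _)
    _ = 2 * C * |r| := by rw [sub_add_cancel_left, sub_add_cancel_left, abs_neg]; ring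

theorem tendstoUniformly_windowMean (hf : Continuous f) (hC : ∀ t, |f t| ≤ C)
    (hap : HasRelDenseAlmostPeriods f) {m : ℝ}
    (hmean : Tendsto (fun T => (∫ t in (0:ℝ)..T, f t) / T) atTop (nhds m)) :
    TendstoUniformly (fun T t => (∫ s in t..t + T, f s) / T) (fun _ => m) atTop := by
  rw [Metric.tendstoUniformly_iff]
  intro ε hε
  obtain ⟨L, hL, hLap⟩ := hap (ε / 3) (by positivity)
  have hC0 : 0 ≤ C := (abs_nonneg _).trans (hC 0)
  filter_upwards [Metric.tendsto_nhds.mp hmean (ε / 3) (by positivity),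
    eventually_gt_atTop (6 * L * C / ε), eventually_gt_atTop 0] with T hmeanT hTlarge hT0 t
  obtain ⟨τ, ⟨hτl, hτr⟩, hτ⟩ := hLap (-t)
  have hshift := abs_integral_sub_integral_add_le_of_almostPeriod hf hτ t (t + T)
  have hslide := abs_integral_add_sub_integral_le_of_abs_le hf hC 0 T (t + τ)
  rw [zero_add, add_comm T, abs_of_nonneg (by linarith : 0 ≤ t + τ)] at hslide
  rw [add_right_comm t T τ, add_sub_cancel_left, abs_of_pos hT0] at hshift
  have hCL : 2 * C * (t + τ) < ε / 3 * T := by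
    rw [div_lt_iff₀ hε] at hTlarge
    nlinarith
  have hdiff : |(∫ s in t..t + T, f s) - ∫ s in (0:ℝ)..T, f s| < 2 * ε / 3 * T := by
    linarith [abs_sub_le (∫ s in t..t + T, f s) (∫ s in t + τ..t + τ + T, f s)
      (∫ s in (0:ℝ)..T, f s)]
  rw [Real.dist_eq] at hmeanT ⊢
  calc |m - (∫ s in t..t + T, f s) / T|
      ≤ |m - (∫ s in (0:ℝ)..T, f s) / T|
        + |(∫ s in (0:ℝ)..T, f s) / T - (∫ s in t..t + T, f s) / T| := abs_sub_le _ _ _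
    _ = |(∫ s in (0:ℝ)..T, f s) / T - m|
        + |(∫ s in t..t + T, f s) - ∫ s in (0:ℝ)..T, f s| / T := by
        rw [abs_sub_comm m, ← sub_div, abs_div, abs_of_pos hT0,
          abs_sub_comm (∫ s in (0:ℝ)..T, f s)]
    _ < ε / 3 + 2 * ε / 3 := add_lt_add hmeanT ((div_lt_iff₀ hT0).mpr hdiff)
    _ = ε := by ring

end WindowMean

section WindowCorrector

variable {f : ℝ → ℝ} {C T : ℝ}

def windowCorrector (f : ℝ → ℝ) (T t : ℝ) : ℝ :=
  (∫ s in t..t + T, ∫ u in t..s, f u) / T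

lemma hasDerivAt_windowCorrector (hf : Continuous f) (hT : T ≠ 0) (t : ℝ) :
    HasDerivAt (windowCorrector f T) ((∫ s in t..t + T, f s) / T - f t) t := by
  set B : ℝ → ℝ := fun v => ∫ s in (0:ℝ)..v, f s
  have hB (v : ℝ) : HasDerivAt B (f v) v := (hf.integral_hasStrictDerivAt 0 v).hasDerivAt
  have hBc : Continuous B := continuous_iff_continuousAt.2 fun v => (hB v).continuousAt
  have hP (v : ℝ) : HasDerivAt (fun w => ∫ s in (0:ℝ)..w, B s) (B v) v :=
    (hBc.integral_hasStrictDerivAt 0 v).hasDerivAt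
  have hincr (u v : ℝ) : ∫ s in u..v, f s = B v - B u :=
    (integral_interval_sub_left (hf.intervalIntegrable 0 v) (hf.intervalIntegrable 0 u)).symm
  have heq : windowCorrector f T =
      fun t => ((∫ s in (0:ℝ)..t + T, B s) - ∫ s in (0:ℝ)..t, B s) / T - B t := by
    funext t
    simp only [windowCorrector, hincr t]
    rw [integral_sub (hBc.intervalIntegrable _ _) intervalIntegrable_const,
      intervalIntegral.integral_const,
      smul_eq_mul, add_sub_cancel_left, integral_interval_sub_left (hBc.intervalIntegrable _ _)
      (hBc.intervalIntegrable _ _)]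
    field_simp
  rw [heq, hincr]
  exact ((((hP (t + T)).comp_add_const t T).sub (hP t)).div_const T).sub (hB t)

lemma abs_intervalIntegral_div_le (hC : ∀ t, |f t| ≤ C) (t T : ℝ) :
    |(∫ s in t..t + T, f s) / T| ≤ C := by
  have hC0 : 0 ≤ C := (abs_nonneg _).trans (hC t)
  rw [abs_div]
  refine div_le_of_le_mul₀ (abs_nonneg _) hC0 ?_
  simpa only [add_sub_cancel_left, Real.norm_eq_abs] using
    intervalIntegral.norm_integral_le_of_norm_le_const (a := t) (b := t + T)
      fun s _ => (Real.norm_eq_abs (f s)).trans_le (hC s)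

lemma abs_windowCorrector_le (hC : ∀ t, |f t| ≤ C) (hT : 0 ≤ T) (t : ℝ) :
    |windowCorrector f T t| ≤ C * T := by
  have hC0 : 0 ≤ C := (abs_nonneg _).trans (hC t)
  have hincrement (s : ℝ) (hs : s ∈ Set.uIoc t (t + T)) :
      ‖∫ u in t..s, f u‖ ≤ C * T := by
    rw [Set.uIoc_of_le (by linarith)] at hs
    refine (intervalIntegral.norm_integral_le_of_norm_le_const
      fun u _ => (Real.norm_eq_abs (f u)).trans_le (hC u)).trans ?_
    gcongr
    rw [abs_of_pos (by linarith [hs.1])]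
    linarith [hs.2]
  rw [windowCorrector, abs_div, abs_of_nonneg hT]
  refine div_le_of_le_mul₀ hT (by positivity) ?_
  simpa only [add_sub_cancel_left, abs_of_nonneg hT, Real.norm_eq_abs] using
    intervalIntegral.norm_integral_le_of_norm_le_const hincrement

lemma lipschitzWith_windowCorrector (hf : Continuous f) (hC : ∀ t, |f t| ≤ C) (hT : T ≠ 0) :
    LipschitzWith (2 * C).toNNReal (windowCorrector f T) := by
  refine lipschitzWith_of_nnnorm_deriv_le
    (fun t => (hasDerivAt_windowCorrector hf hT t).differentiableAt) fun t => ?_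
  rw [(hasDerivAt_windowCorrector hf hT t).deriv, ← NNReal.coe_le_coe, coe_nnnorm,
    Real.coe_toNNReal', Real.norm_eq_abs]
  refine le_max_of_le_left ((abs_sub _ _).trans ?_)
  linarith [abs_intervalIntegral_div_le hC t T, hC t]

end WindowCorrector

theorem exists_corrector {N : ℕ} (D : Set (Pt N))
    (a : ℝ → Pt N → ℝ) (ha : AlmostPeriodicUnif D a)
    (x : Pt N) (hx : x ∈ closure D)
    (ahat : ℝ)
    (hmean : Tendsto (fun T => (∫ t in (0:ℝ)..T, a t x) / T) atTop (nhds ahat))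
    (ε : ℝ) (hε : 0 < ε) :
    ∃ A A' : ℝ → ℝ,
      (∃ C, ∀ t, |A t| ≤ C) ∧ (∃ L : NNReal, LipschitzWith L A) ∧
      ∀ᵐ t : ℝ, HasDerivAt A (A' t) t ∧ ahat - ε ≤ a t x + A' t := by
  obtain ⟨C, hC⟩ := ha.1
  have hf : Continuous fun t => a t x := ha.2.1.continuous_slice hx
  have hunif := tendstoUniformly_windowMean hf (fun t => hC t x)
    (ha.hasRelDenseAlmostPeriods_slice hx) hmean
  obtain ⟨T, hmeanT, hT⟩ :=
    ((Metric.tendstoUniformly_iff.mp hunif ε hε).and (eventually_gt_atTop 0)).exists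
  refine ⟨windowCorrector (fun t => a t x) T, fun t => (∫ s in t..t + T, a s x) / T - a t x,
    ⟨C * T, abs_windowCorrector_le (fun t => hC t x) hT.le⟩,
    ⟨_, lipschitzWith_windowCorrector hf (fun t => hC t x) hT.ne'⟩,
    .of_forall fun t => ⟨hasDerivAt_windowCorrector hf hT.ne' t, ?_⟩⟩
  have hclose := hmeanT t
  rw [Real.dist_eq, abs_lt] at hclose
  linarith

end
end

section
/- Let Ω ⊂ ℝ^N be compact, T > 0, and w a positive continuous function on [0,T] × Ω. Define θ(x,y) = (1/T)∫₀^T w(t,y)/w(t,x) dt. Then either w(t,x) is independent of x, or there exists x* ∈ Ω such that θ(x*,y) ≥ 1 for all y ∈ Ω, with strict inequality for some y ∈ Ω. -/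
open MeasureTheory Filter Real

noncomputable section

/-!
Choose `xs ∈ Ω` minimizing `g x = ∫₀ᵀ log w(t, x) dt`, which is continuous on the compact set `Ω`.
For `y ∈ Ω` put `F = log w(·, y) - log w(·, xs)`. Integrating `exp F ≥ 1 + F` over `[0, T]` gives
`∫₀ᵀ w(t, y) / w(t, xs) dt ≥ T + g y - g xs ≥ T`, and since `exp u = 1 + u` only at `u = 0`,
the inequality is strict unless `w(·, y) = w(·, xs)` on `[0, T]`. So either every `w(·, y)`
coincides with `w(·, xs)`, and `w` does not depend on `x`, or some `θ(xs, y)` exceeds `1`.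
-/

namespace intervalIntegral

open Set

theorem continuousOn_parametric_intervalIntegral_of_continuousOn
    {X E : Type*} [TopologicalSpace X] [NormedAddCommGroup E] [NormedSpace ℝ E]
    {μ : Measure ℝ} [IsLocallyFiniteMeasure μ] [NullSingletonClass μ]
    {f : ℝ → X → E} {s : Set X} {a b : ℝ}
    (hab : a ≤ b) (hf : ContinuousOn (Function.uncurry f) (Icc a b ×ˢ s)) :
    ContinuousOn (fun x => ∫ t in a..b, f t x ∂μ) s := by
  -- Clamping the time variable to `[a, b]` gives a jointly continuous function on `s × ℝ`.
  set f' : s → ℝ → E := fun x t => f (projIcc a b hab t) x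
  have hf' : Continuous (Function.uncurry f') :=
    hf.comp_continuous (f := fun p : s × ℝ => ((projIcc a b hab p.2 : ℝ), (p.1 : X)))
      (by fun_prop) fun p => ⟨(projIcc a b hab p.2).2, p.1.2⟩
  have heq : ∀ x : s, ∫ t in a..b, f' x t ∂μ = ∫ t in a..b, f t x ∂μ := fun x =>
    integral_congr fun t ht => by
      rw [uIcc_of_le hab] at ht
      simp only [f', projIcc_of_mem hab ht]
  rw [continuousOn_iff_continuous_domRestrict]
  exact (continuous_parametric_intervalIntegral_of_continuous' (μ := μ) hf' a b).congr heq

theorem integral_add_one {F : ℝ → ℝ} {a b : ℝ} (hF : IntervalIntegrable F volume a b) :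
    ∫ t in a..b, (F t + 1) = b - a + ∫ t in a..b, F t := by
  rw [integral_add hF intervalIntegrable_const, integral_const, smul_eq_mul, mul_one, add_comm]

theorem sub_add_integral_le_integral_exp {F : ℝ → ℝ} {a b : ℝ} (hab : a ≤ b)
    (hF : ContinuousOn F (Icc a b)) :
    b - a + ∫ t in a..b, F t ≤ ∫ t in a..b, exp (F t) := by
  have hFi : IntervalIntegrable F volume a b := hF.intervalIntegrable_of_Icc hab
  calc b - a + ∫ t in a..b, F t = ∫ t in a..b, (F t + 1) := (integral_add_one hFi).symm
    _ ≤ ∫ t in a..b, exp (F t) :=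
        integral_mono_on hab (hFi.add intervalIntegrable_const)
          ((continuous_exp.comp_continuousOn hF).intervalIntegrable_of_Icc hab)
          fun t _ => add_one_le_exp (F t)

theorem sub_add_integral_lt_integral_exp {F : ℝ → ℝ} {a b : ℝ} (hab : a < b)
    (hF : ContinuousOn F (Icc a b)) (hne : ∃ c ∈ Icc a b, F c ≠ 0) :
    b - a + ∫ t in a..b, F t < ∫ t in a..b, exp (F t) := by
  have hFi : IntervalIntegrable F volume a b := hF.intervalIntegrable_of_Icc hab.le
  obtain ⟨c, hc, hFc⟩ := hne
  calc b - a + ∫ t in a..b, F t = ∫ t in a..b, (F t + 1) := (integral_add_one hFi).symm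
    _ < ∫ t in a..b, exp (F t) :=
        integral_lt_integral_of_continuousOn_of_le_of_exists_lt hab (hF.add continuousOn_const)
          (continuous_exp.comp_continuousOn hF) (fun t _ => add_one_le_exp (F t))
          ⟨c, hc, add_one_lt_exp hFc⟩

end intervalIntegral

section LogRatio

open Set intervalIntegral

variable {u v : ℝ → ℝ} {a b : ℝ}

theorem integral_div_eq_integral_exp_log_sub (hab : a ≤ b) (hu₀ : ∀ t ∈ Icc a b, 0 < u t)
    (hv₀ : ∀ t ∈ Icc a b, 0 < v t) :
    ∫ t in a..b, u t / v t = ∫ t in a..b, exp (log (u t) - log (v t)) :=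
  integral_congr fun t ht => by
    rw [uIcc_of_le hab] at ht
    rw [exp_sub, exp_log (hu₀ t ht), exp_log (hv₀ t ht)]

theorem sub_add_integral_log_sub_le_integral_div (hab : a ≤ b)
    (hu : ContinuousOn u (Icc a b)) (hv : ContinuousOn v (Icc a b))
    (hu₀ : ∀ t ∈ Icc a b, 0 < u t) (hv₀ : ∀ t ∈ Icc a b, 0 < v t) :
    b - a + ((∫ t in a..b, log (u t)) - ∫ t in a..b, log (v t)) ≤ ∫ t in a..b, u t / v t := by
  have hlu := hu.log fun t ht => (hu₀ t ht).ne'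
  have hlv := hv.log fun t ht => (hv₀ t ht).ne'
  rw [← integral_sub (hlu.intervalIntegrable_of_Icc hab) (hlv.intervalIntegrable_of_Icc hab),
    integral_div_eq_integral_exp_log_sub hab hu₀ hv₀]
  exact sub_add_integral_le_integral_exp hab (hlu.sub hlv)

theorem sub_add_integral_log_sub_lt_integral_div (hab : a < b)
    (hu : ContinuousOn u (Icc a b)) (hv : ContinuousOn v (Icc a b))
    (hu₀ : ∀ t ∈ Icc a b, 0 < u t) (hv₀ : ∀ t ∈ Icc a b, 0 < v t)
    (hne : ∃ c ∈ Icc a b, u c ≠ v c) :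
    b - a + ((∫ t in a..b, log (u t)) - ∫ t in a..b, log (v t)) < ∫ t in a..b, u t / v t := by
  have hlu := hu.log fun t ht => (hu₀ t ht).ne'
  have hlv := hv.log fun t ht => (hv₀ t ht).ne'
  rw [← integral_sub (hlu.intervalIntegrable_of_Icc hab.le) (hlv.intervalIntegrable_of_Icc hab.le),
    integral_div_eq_integral_exp_log_sub hab.le hu₀ hv₀]
  obtain ⟨c, hc, huv⟩ := hne
  refine sub_add_integral_lt_integral_exp hab (hlu.sub hlv) ⟨c, hc, sub_ne_zero.2 fun h => huv ?_⟩
  exact log_injOn_pos (hu₀ c hc) (hv₀ c hc) h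

end LogRatio

theorem ratio_average_lemma {N : ℕ} (Ω : Set (Pt N)) (hΩ : IsCompact Ω)
    (T : ℝ) (hT : 0 < T) (w : ℝ → Pt N → ℝ)
    (hwc : ContinuousOn (fun p : ℝ × Pt N => w p.1 p.2) (Set.Icc 0 T ×ˢ Ω))
    (hwpos : ∀ t ∈ Set.Icc (0:ℝ) T, ∀ x ∈ Ω, 0 < w t x) :
    (∀ t ∈ Set.Icc (0:ℝ) T, ∀ x ∈ Ω, ∀ y ∈ Ω, w t x = w t y) ∨
    ∃ xs ∈ Ω,
      (∀ y ∈ Ω, 1 ≤ (∫ t in (0:ℝ)..T, w t y / w t xs) / T) ∧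
      (∃ y ∈ Ω, 1 < (∫ t in (0:ℝ)..T, w t y / w t xs) / T) := by
  rcases Ω.eq_empty_or_nonempty with rfl | hΩne
  · exact Or.inl fun _ _ x hx => hx.elim
  have hslice : ∀ y ∈ Ω, ContinuousOn (fun t => w t y) (Set.Icc 0 T) := fun y hy =>
    hwc.comp (continuous_id.prodMk continuous_const).continuousOn fun t ht => ⟨ht, hy⟩
  have hpos : ∀ y ∈ Ω, ∀ t ∈ Set.Icc 0 T, 0 < w t y := fun y hy t ht => hwpos t ht y hy
  obtain ⟨xs, hxs, hmin⟩ : ∃ xs ∈ Ω, ∀ y ∈ Ω,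
      ∫ t in (0:ℝ)..T, log (w t xs) ≤ ∫ t in (0:ℝ)..T, log (w t y) :=
    hΩ.exists_isMinOn hΩne
      (intervalIntegral.continuousOn_parametric_intervalIntegral_of_continuousOn (μ := volume)
        (f := fun t x => log (w t x)) hT.le
        (hwc.log fun p hp => (hwpos p.1 hp.1 p.2 hp.2).ne'))
  have hle : ∀ y ∈ Ω, T ≤ ∫ t in (0:ℝ)..T, w t y / w t xs := fun y hy => by
    have := sub_add_integral_log_sub_le_integral_div hT.le (hslice y hy) (hslice xs hxs)
      (hpos y hy) (hpos xs hxs)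
    linarith [hmin y hy]
  by_cases hsame : ∀ y ∈ Ω, ∀ t ∈ Set.Icc (0:ℝ) T, w t y = w t xs
  · exact Or.inl fun t ht x hx y hy => by rw [hsame x hx t ht, hsame y hy t ht]
  push Not at hsame
  obtain ⟨y, hy, hne⟩ := hsame
  refine Or.inr ⟨xs, hxs, fun y hy => (one_le_div hT).2 (hle y hy), y, hy, (one_lt_div hT).2 ?_⟩
  have := sub_add_integral_log_sub_lt_integral_div hT (hslice y hy) (hslice xs hxs)
    (hpos y hy) (hpos xs hxs) hne
  linarith [hmin y hy]
end
end
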